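/- arXiv:2404.17432 — 2 statements merged into one kernel-verified Lean document; each statement's English description precedes it below -/
import Mathlib

section
/- Let a = (a_1,…,a_n) be a weak composition with i < j indices such that a_i < a_j. Then the key diagram 𝔻(a s_{i,j}), where a s_{i,j} is obtained from a by swapping entries a_i and a_j, belongs to the Kohnert poset P(𝔻(a)); i.e., 𝔻(a s_{i,j}) is reachable from 𝔻(a) by a sequence of Kohnert moves. -/
namespace KohnertPaper

abbrev Diagram := Finset (ℕ × ℕ)

/-- `D'` is obtained from `D` by a single Kohnert move: the rightmost cell `(r,c)` of row `r`
moves down its column to the first empty position `(r',c)` below it. -/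
def KMove (D D' : Diagram) : Prop :=
  ∃ r c r' : ℕ, 1 ≤ r' ∧ r' < r ∧ (r, c) ∈ D ∧
    (∀ c', c < c' → (r, c') ∉ D) ∧
    (r', c) ∉ D ∧
    (∀ r₁, r' < r₁ → r₁ < r → (r₁, c) ∈ D) ∧
    D' = insert (r', c) (D.erase (r, c))

/-- `KReach D T` : `T` is obtainable from `D` by a (possibly empty) sequence of Kohnert moves. -/
def KReach : Diagram → Diagram → Prop := Relation.ReflTransGen KMove

/-- The underlying set of the Kohnert poset of `D`. -/
def KD (D : Diagram) : Set Diagram := {T | KReach D T}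

/-- The order of the Kohnert poset: `X ⪯ Y` iff `X` is obtainable from `Y` by Kohnert moves. -/
def KLe (X Y : Diagram) : Prop := KReach Y X

variable {α : Type*}

/-- A chain of the poset `(P, le)`, i.e. a face of the order complex. -/
def IsPChain (le : α → α → Prop) (P : Set α) (s : Finset α) : Prop :=
  ↑s ⊆ P ∧ ∀ x ∈ s, ∀ y ∈ s, le x y ∨ le y x

/-- A facet of the order complex of `(P, le)`: a maximal chain. -/
def IsFacet (le : α → α → Prop) (P : Set α) (s : Finset α) : Prop :=
  IsPChain le P s ∧ ∀ t : Finset α, IsPChain le P t → s ⊆ t → s = t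

/-- Shellability of the order complex of the poset `(P, le)`: there is an ordering
`F_0, …, F_{t-1}` of all its facets such that for each `k ≥ 1` the complex
`(⋃_{i<k} F̄_i) ∩ F̄_k` is pure of dimension `dim F_k − 1`. -/
def Shellable (le : α → α → Prop) (P : Set α) : Prop :=
  ∃ L : List (Finset α), L.Nodup ∧ (∀ s, IsFacet le P s ↔ s ∈ L) ∧
    ∀ k : Fin L.length, 1 ≤ (k : ℕ) →
      ∀ σ : Finset α, σ ⊆ L.get k →
        (∃ i : Fin L.length, (i : ℕ) < (k : ℕ) ∧ σ ⊆ L.get i) →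
        ∃ τ : Finset α, σ ⊆ τ ∧ τ ⊆ L.get k ∧
          (∃ i : Fin L.length, (i : ℕ) < (k : ℕ) ∧ τ ⊆ L.get i) ∧
          τ.card + 1 = (L.get k).card

/-- A poset is pure if all facets of its order complex have the same cardinality. -/
def Pure (le : α → α → Prop) (P : Set α) : Prop :=
  ∀ s t : Finset α, IsFacet le P s → IsFacet le P t → s.card = t.card

/-- A poset is bounded if it has a unique minimal and a unique maximal element. -/
def Bounded (le : α → α → Prop) (P : Set α) : Prop :=
  (∃ m ∈ P, ∀ x ∈ P, le m x) ∧ ∃ M ∈ P, ∀ x ∈ P, le x M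

/-- `y` covers `x` in the poset `(P, le)`. -/
def CoversIn (le : α → α → Prop) (P : Set α) (x y : α) : Prop :=
  x ∈ P ∧ y ∈ P ∧ le x y ∧ x ≠ y ∧ ∀ z ∈ P, le x z → le z y → z = x ∨ z = y

/-- The closed interval `[x,y]` of `(P, le)`. -/
def intervalSet (le : α → α → Prop) (P : Set α) (x y : α) : Set α :=
  {z ∈ P | le x z ∧ le z y}

/-- A saturated (maximal) chain of the interval `[x,y]`, recorded as a list going
from `x` up to `y` through covering relations of the interval. -/
def IsSatChain (le : α → α → Prop) (P : Set α) (x y : α) (c : List α) : Prop :=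
  c ≠ [] ∧ c.head? = some x ∧ c.getLast? = some y ∧
    List.Chain' (CoversIn le (intervalSet le P x y)) c

/-- The word of edge labels along a chain. -/
def labelWord (lab : α → α → ℤ) (c : List α) : List ℤ :=
  (c.zip c.tail).map fun p => lab p.1 p.2

/-- EL-shellability: there is an integer edge labeling such that every interval `[x,y]`
has a unique rising maximal chain, which is lexicographically strictly smaller than every
other maximal chain of the interval. -/
def ELShellable (le : α → α → Prop) (P : Set α) : Prop :=
  ∃ lab : α → α → ℤ,
    ∀ x ∈ P, ∀ y ∈ P, le x y →
      ∃ c : List α, IsSatChain le P x y c ∧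
        List.Pairwise (· ≤ ·) (labelWord lab c) ∧
        (∀ c', IsSatChain le P x y c' → List.Pairwise (· ≤ ·) (labelWord lab c') → c' = c) ∧
        ∀ c', IsSatChain le P x y c' → c' ≠ c →
          List.Lex (· < ·) (labelWord lab c) (labelWord lab c')

/-- The diagram `H(r₁,r₂;C)`. -/
def hookSeed (r1 r2 : ℕ) (C : Finset ℕ) (hC : C.Nonempty) : Diagram :=
  C.image (fun c => (r2, c)) ∪ (Finset.Icc r1 r2).image fun j => (j, C.max' hC)

/-- A hook diagram: a diagram obtainable from some `H(r₁,r₂;C)` by Kohnert moves. -/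
def IsHookDiagram (D : Diagram) : Prop :=
  ∃ (r1 r2 : ℕ) (C : Finset ℕ) (hC : C.Nonempty),
    1 ≤ r1 ∧ r1 ≤ r2 ∧ (∀ c ∈ C, 1 ≤ c) ∧ KReach (hookSeed r1 r2 C hC) D

/-- The key diagram of the weak composition `(a 1, …, a n)`. -/
def keyDiagram (n : ℕ) (a : ℕ → ℕ) : Diagram :=
  (Finset.Icc 1 n).biUnion fun i => (Finset.Icc 1 (a i)).image fun j => (i, j)

/-- Number of cells of `T` in row `r`. -/
def rowCount (T : Diagram) (r : ℕ) : ℕ := (T.filter fun p => p.1 = r).card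

/-- The Kohnert polynomial of `D` is multiplicity free iff distinct diagrams of `KD(D)`
have distinct weights (row-count vectors). -/
def MultFree (D : Diagram) : Prop :=
  ∀ T1 ∈ KD D, ∀ T2 ∈ KD D, (∀ r, rowCount T1 r = rowCount T2 r) → T1 = T2

/-- The key diagram of a weak composition given as a list. -/
def keyDiagramL (l : List ℕ) : Diagram := keyDiagram l.length fun i => l.getD (i - 1) 0

/-! The cells of row `j` in columns `aᵢ + 1, …, aⱼ` are moved down to row `i` one at a time,
rightmost first. Such a cell in column `c` falls through the rows of length `≥ c` and lands in a row
of length `< c`; that row is left-justified, so the cell is again the rightmost one of its row and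
falls on, until it reaches row `i`, which is empty in column `c` because `aᵢ < c`. -/

theorem kReach_slide_down {D : Diagram} {i p c : ℕ} (hi : 1 ≤ i) (hip : i < p)
    (hic : (i, c) ∉ D) (hpc : (p, c) ∈ D) (hright : ∀ c', c < c' → (p, c') ∉ D)
    (hgap : ∀ r, i < r → r < p → (r, c) ∉ D → ∀ c', c < c' → (r, c') ∉ D) :
    KReach D (insert (i, c) (D.erase (p, c))) := by
  induction p using Nat.strong_induction_on generalizing D with
  | _ p ih =>
  obtain ⟨q, hq, hqmax⟩ := ((Finset.Ico i p).filter fun r => (r, c) ∉ D).exists_max_image id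
    ⟨i, by simp [hip, hic]⟩
  simp only [Finset.mem_filter, Finset.mem_Ico, id] at hq hqmax
  obtain ⟨⟨hiq, hqp⟩, hqc⟩ := hq
  have hfull : ∀ r, q < r → r < p → (r, c) ∈ D := fun r hqr hrp => by
    by_contra hrc
    exact absurd (hqmax r ⟨⟨by omega, hrp⟩, hrc⟩) (by omega)
  have hmove : KMove D (insert (q, c) (D.erase (p, c))) :=
    ⟨p, c, q, hi.trans hiq, hqp, hpc, hright, hqc, hfull, rfl⟩
  rcases hiq.eq_or_lt with rfl | hiq
  · exact .single hmove
  have hrest : insert (i, c) ((insert (q, c) (D.erase (p, c))).erase (q, c)) =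
      insert (i, c) (D.erase (p, c)) := by
    rw [Finset.erase_insert (by simp [hqc])]
  rw [← hrest]
  refine .head hmove (ih q hqp hiq ?_ (by simp) ?_ ?_)
  · simp [hic, hiq.ne]
  · intro c' hcc'
    simpa [hcc'.ne', hqp.ne] using hgap q hiq hqp hqc c' hcc'
  · intro r hir hrq hrc c' hcc'
    have hr : (r, c) ∉ D := by simpa [hrq.ne, (hrq.trans hqp).ne] using hrc
    simpa [hrq.ne, (hrq.trans hqp).ne] using hgap r hir (hrq.trans hqp) hr c' hcc'

lemma mem_keyDiagram {n : ℕ} {a : ℕ → ℕ} {r x : ℕ} :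
    (r, x) ∈ keyDiagram n a ↔ 1 ≤ r ∧ r ≤ n ∧ 1 ≤ x ∧ x ≤ a r := by
  simp [keyDiagram, and_assoc]

/-- The key diagram of `a` after the rightmost `t` cells of row `j` have been slid down to row `i`. -/
def keyTransfer (n : ℕ) (a : ℕ → ℕ) (i j t : ℕ) : Diagram :=
  keyDiagram n (Function.update a j (a j - t)) ∪ (Finset.Ioc (a j - t) (a j)).image fun x => (i, x)

lemma mem_keyTransfer {n : ℕ} {a : ℕ → ℕ} {i j t r x : ℕ} :
    (r, x) ∈ keyTransfer n a i j t ↔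
      (1 ≤ r ∧ r ≤ n ∧ 1 ≤ x ∧ x ≤ if r = j then a j - t else a r) ∨
        (r = i ∧ a j - t < x ∧ x ≤ a j) := by
  simp [keyTransfer, mem_keyDiagram, Function.update_apply, eq_comm (a := i),
    and_comm (b := r = i)]

section Transfer

variable {n : ℕ} {a : ℕ → ℕ} {i j : ℕ}

lemma keyTransfer_zero : keyTransfer n a i j 0 = keyDiagram n a := by
  ext ⟨r, x⟩
  rw [mem_keyTransfer, mem_keyDiagram]
  split_ifs <;> subst_vars <;> omega

lemma kReach_keyTransfer_succ (hi : 1 ≤ i) (hij : i < j) (hj : j ≤ n) {t : ℕ}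
    (ht : t < a j - a i) : KReach (keyTransfer n a i j t) (keyTransfer n a i j (t + 1)) := by
  have hslide := kReach_slide_down (D := keyTransfer n a i j t) (c := a j - t) hi hij
    (by simp only [mem_keyTransfer, hij.ne, if_false]; omega)
    (by simp only [mem_keyTransfer, ↓reduceIte]; omega)
    (fun c' hc' => by
      simp only [mem_keyTransfer, ↓reduceIte, hij.ne', false_and, or_false]; omega)
    (fun r hir hrj => by
      simp only [mem_keyTransfer, hrj.ne, hir.ne', if_false, false_and, or_false]; omega)
  convert hslide using 1
  ext ⟨r, x⟩
  simp only [mem_keyTransfer, Finset.mem_insert, Finset.mem_erase, ne_eq, Prod.mk.injEq]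
  split_ifs <;> subst_vars <;> omega

lemma kReach_keyTransfer (hi : 1 ≤ i) (hij : i < j) (hj : j ≤ n) {t : ℕ} (ht : t ≤ a j - a i) :
    KReach (keyDiagram n a) (keyTransfer n a i j t) := by
  induction t with
  | zero => rw [keyTransfer_zero]; exact .refl
  | succ t ih => exact (ih (by omega)).trans (kReach_keyTransfer_succ hi hij hj (by omega))

end Transfer

/-- If `i < j` and `aᵢ < aⱼ`, then the key diagram of `a` with entries `i` and `j` swapped is
reachable from the key diagram of `a` by Kohnert moves. -/
theorem stmt_16 (n : ℕ) (a : ℕ → ℕ) (i j : ℕ)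
    (hi : 1 ≤ i) (hij : i < j) (hj : j ≤ n) (hlt : a i < a j) :
    KReach (keyDiagram n a)
      (keyDiagram n fun k => if k = i then a j else if k = j then a i else a k) := by
  have hswap : keyTransfer n a i j (a j - a i) =
      keyDiagram n fun k => if k = i then a j else if k = j then a i else a k := by
    ext ⟨r, x⟩
    simp only [mem_keyTransfer, mem_keyDiagram]
    split_ifs <;> subst_vars <;> omega
  exact hswap ▸ kReach_keyTransfer hi hij hj le_rfl

end KohnertPaper
end

section
/- Let a be a pure composition with pure decomposition (α_1,…,α_m) (so the entries of a are the concatenation of the α_j, with min(α_{j−1}) ≥ max(α_j) for all j > 1). Then there is a poset isomorphism P(𝔻(a)) ≅ P(𝔻(α_1)) × ⋯ × P(𝔻(α_m)), where the product poset has the componentwise order. -/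
namespace KohnertPaper

variable {α : Type*}

/-- A weak composition (given as a list) is pure. -/
def PureCompL (l : List ℕ) : Prop :=
  ¬ ∃ j1 j2 j3, j1 < j2 ∧ j2 < j3 ∧ j3 < l.length ∧
    ((l.getD j1 0 < l.getD j2 0 ∧ l.getD j2 0 < l.getD j3 0) ∨
     (l.getD j1 0 < l.getD j3 0 ∧ l.getD j3 0 < l.getD j2 0) ∨
     (l.getD j1 0 + 1 < l.getD j2 0 ∧ l.getD j2 0 = l.getD j3 0))

/-! Kohnert moves push a cell down its own column and never below row `1`; a column that is
full in rows `1, …, n` stays full, since the empty square a move lands on lies above row `n`. In `𝔻(α₁ ⋯ α_m)` block `α_j` fills the rows `(o_j, o_j + |α_j|]`, where `o_j` is the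
number of rows of the earlier blocks, and every cell of a later block lies in a column
`c ≤ min α_j`, which is full in the rows of block `j` and stays so. Hence a cell of block `i`
never leaves the rows of block `i`: every diagram of `P(𝔻(a))` is the disjoint union of the
shifted diagrams of a family in `∏ⱼ P(𝔻(α_j))`, and a Kohnert move of the union is a Kohnert
move of exactly one member of the family. -/

def RowsWithin (n : ℕ) (S : Diagram) : Prop := ∀ p ∈ S, 1 ≤ p.1 ∧ p.1 ≤ n

namespace KReach

variable {D T : Diagram}

theorem exists_mem_above (h : KReach D T) {p : ℕ × ℕ} (hp : p ∈ T) :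
    ∃ q ∈ D, q.2 = p.2 ∧ p.1 ≤ q.1 := by
  induction h generalizing p with
  | refl => exact ⟨p, hp, rfl, le_rfl⟩
  | tail _ hmove ih =>
    obtain ⟨r, c, r', -, hr', hrc, -, -, -, rfl⟩ := hmove
    rcases Finset.mem_insert.mp hp with rfl | hp
    · obtain ⟨q, hq, hq2, hq1⟩ := ih hrc
      exact ⟨q, hq, hq2, by dsimp only at hq1 ⊢; omega⟩
    · exact ih (Finset.mem_of_mem_erase hp)

theorem one_le_fst (hD : ∀ q ∈ D, 1 ≤ q.1) (h : KReach D T) : ∀ p ∈ T, 1 ≤ p.1 := by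
  induction h with
  | refl => exact hD
  | tail _ hmove ih =>
    obtain ⟨r, c, r', hr', -, -, -, -, -, rfl⟩ := hmove
    intro p hp
    rcases Finset.mem_insert.mp hp with rfl | hp
    · exact hr'
    · exact ih p (Finset.mem_of_mem_erase hp)

theorem rowsWithin {n : ℕ} (hD : RowsWithin n D) (h : KReach D T) : RowsWithin n T :=
  fun p hp =>
    have ⟨q, hq, _, hpq⟩ := h.exists_mem_above hp
    ⟨h.one_le_fst (fun q hq => (hD q hq).1) p hp, hpq.trans (hD q hq).2⟩

theorem mem_of_column_full {n c : ℕ} (hD : ∀ s, 1 ≤ s → s ≤ n → (s, c) ∈ D) (h : KReach D T) :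
    ∀ s, 1 ≤ s → s ≤ n → (s, c) ∈ T := by
  induction h with
  | refl => exact hD
  | tail _ hmove ih =>
    obtain ⟨r, c₀, r', hr', hlt, -, -, hfree, -, rfl⟩ := hmove
    intro s hs hsn
    refine Finset.mem_insert_of_mem (Finset.mem_erase.mpr ⟨?_, ih s hs hsn⟩)
    rintro ⟨⟩
    exact hfree (ih r' hr' (by omega))

end KReach

theorem mem_keyDiagramL {l : List ℕ} {r c : ℕ} :
    (r, c) ∈ keyDiagramL l ↔ 1 ≤ r ∧ r ≤ l.length ∧ 1 ≤ c ∧ c ≤ l.getD (r - 1) 0 := by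
  simp only [keyDiagramL, keyDiagram, Finset.mem_biUnion, Finset.mem_Icc, Finset.mem_image,
    Prod.mk.injEq]
  constructor
  · rintro ⟨i, hi, j, hj, rfl, rfl⟩
    exact ⟨hi.1, hi.2, hj⟩
  · rintro ⟨h1, h2, h3, h4⟩
    exact ⟨r, ⟨h1, h2⟩, c, ⟨h3, h4⟩, rfl, rfl⟩

theorem rowsWithin_keyDiagramL (l : List ℕ) : RowsWithin l.length (keyDiagramL l) :=
  fun _ hp => by
    obtain ⟨h1, h2, -⟩ := mem_keyDiagramL.mp hp
    exact ⟨h1, h2⟩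

section KeyDiagram

variable {l : List ℕ} {T : Diagram}

theorem rowsWithin_of_mem_KD (hT : T ∈ KD (keyDiagramL l)) : RowsWithin l.length T :=
  KReach.rowsWithin (rowsWithin_keyDiagramL l) hT

theorem exists_ge_snd_of_mem_KD (hT : T ∈ KD (keyDiagramL l)) {p : ℕ × ℕ} (hp : p ∈ T) :
    1 ≤ p.2 ∧ ∃ x ∈ l, p.2 ≤ x := by
  obtain ⟨⟨r, c⟩, hq, rfl, -⟩ := KReach.exists_mem_above hT hp
  obtain ⟨h1, h2, h3, h4⟩ := mem_keyDiagramL.mp hq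
  rw [List.getD_eq_getElem _ _ (by omega)] at h4
  exact ⟨h3, _, List.getElem_mem _, h4⟩

theorem mem_of_mem_KD_of_forall_le (hT : T ∈ KD (keyDiagramL l)) {r c : ℕ} (hc : 1 ≤ c)
    (hcl : ∀ x ∈ l, c ≤ x) (hr : 1 ≤ r) (hrl : r ≤ l.length) : (r, c) ∈ T := by
  refine KReach.mem_of_column_full (fun s hs hsl => ?_) hT r hr hrl
  rw [mem_keyDiagramL, List.getD_eq_getElem _ _ (by omega)]
  exact ⟨hs, hsl, hc, hcl _ (List.getElem_mem _)⟩

end KeyDiagram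

theorem List.pairwise_of_isChain_of_ne_nil [Preorder α] {L : List (List α)}
    (hne : ∀ b ∈ L, b ≠ []) (h : L.IsChain fun A B => ∀ x ∈ A, ∀ y ∈ B, y ≤ x) :
    L.Pairwise fun A B => ∀ x ∈ A, ∀ y ∈ B, y ≤ x := by
  let R : List α → List α → Prop := fun A B => A ≠ [] ∧ ∀ x ∈ A, ∀ y ∈ B, y ≤ x
  have : Trans R R R := ⟨fun ⟨hA, hAB⟩ ⟨hB, hBC⟩ => ⟨hA, fun x hx z hz =>
    have ⟨y, hy⟩ := List.exists_mem_of_ne_nil _ hB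
    (hBC y hy z hz).trans (hAB x hx y hy)⟩⟩
  have hR : L.IsChain R := h.imp_of_mem_imp fun A _ hA _ hAB => ⟨hne A hA, hAB⟩
  exact (List.isChain_iff_pairwise.mp hR).imp And.right

def blockOffset (L : List (List ℕ)) (i : ℕ) : ℕ := ((L.map List.length).take i).sum

section Blocks

variable {L : List (List ℕ)}

theorem blockOffset_succ (i : Fin L.length) :
    blockOffset L (i + 1) = blockOffset L i + (L.get i).length := by
  simp [blockOffset, List.take_add_one]

theorem blockOffset_mono : Monotone (blockOffset L) :=
  monotone_nat_of_le_succ fun i => by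
    simp only [blockOffset, List.take_add_one, List.sum_append]
    exact Nat.le_add_right _ _

theorem blockOffset_length : blockOffset L L.length = L.flatten.length := by
  simp [blockOffset, List.length_flatten, List.take_of_length_le]

theorem eq_of_add_blockOffset_eq {i j : Fin L.length} {r s : ℕ} (hr : 1 ≤ r)
    (hri : r ≤ (L.get i).length) (hs : 1 ≤ s) (hsj : s ≤ (L.get j).length)
    (h : r + blockOffset L i = s + blockOffset L j) : i = j := by
  have hi := blockOffset_succ i
  have hj := blockOffset_succ j
  rcases lt_trichotomy i j with hij | rfl | hij
  · have := blockOffset_mono (L := L) (show (i : ℕ) + 1 ≤ j from hij)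
    omega
  · rfl
  · have := blockOffset_mono (L := L) (show (j : ℕ) + 1 ≤ i from hij)
    omega

theorem exists_add_blockOffset_eq {x n : ℕ} (hx : 1 ≤ x) (hn : n ≤ L.length)
    (hxn : x ≤ blockOffset L n) :
    ∃ i : Fin L.length, (i : ℕ) < n ∧
      ∃ r, 1 ≤ r ∧ r ≤ (L.get i).length ∧ x = r + blockOffset L i := by
  induction n with
  | zero => simp [blockOffset] at hxn; omega
  | succ n ih =>
    by_cases hx' : x ≤ blockOffset L n
    · obtain ⟨i, hi, hrest⟩ := ih (by omega) hx'
      exact ⟨i, by omega, hrest⟩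
    · have hn' : n < L.length := by omega
      have := blockOffset_succ (L := L) ⟨n, hn'⟩
      refine ⟨⟨n, hn'⟩, Nat.lt_succ_self n, x - blockOffset L n, ?_, ?_, ?_⟩ <;>
        dsimp only at this ⊢ <;> omega

theorem getD_flatten_blockOffset_add (i : Fin L.length) {k : ℕ} (hk : k < (L.get i).length) :
    L.flatten.getD (blockOffset L i + k) 0 = (L.get i).getD k 0 := by
  simp only [List.getD_eq_getElem?_getD, blockOffset, ← List.getElem?_drop,
    List.drop_sum_flatten, List.drop_eq_getElem_cons i.isLt, List.flatten_cons]
  rw [List.getElem?_append_left (by simpa using hk)]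
  rfl

end Blocks

def glue (L : List (List ℕ)) (S : Fin L.length → Diagram) : Diagram :=
  Finset.univ.biUnion fun i => (S i).image fun p => (p.1 + blockOffset L i, p.2)

section Glue

variable {L : List (List ℕ)} {S : Fin L.length → Diagram}

theorem mem_glue {q : ℕ × ℕ} :
    q ∈ glue L S ↔ ∃ i, ∃ p ∈ S i, (p.1 + blockOffset L i, p.2) = q := by
  simp [glue]

theorem add_blockOffset_mem_glue_iff (hS : ∀ i, RowsWithin (L.get i).length (S i))
    (i : Fin L.length) {r c : ℕ} (hr : 1 ≤ r) (hri : r ≤ (L.get i).length) :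
    (r + blockOffset L i, c) ∈ glue L S ↔ (r, c) ∈ S i := by
  refine ⟨fun h => ?_, fun h => mem_glue.mpr ⟨i, _, h, rfl⟩⟩
  obtain ⟨j, ⟨s, c'⟩, hp, heq⟩ := mem_glue.mp h
  simp only [Prod.mk.injEq] at heq
  obtain ⟨heq, rfl⟩ := heq
  obtain rfl := eq_of_add_blockOffset_eq (hS j _ hp).1 (hS j _ hp).2 hr hri heq
  obtain rfl : s = r := by omega
  exact hp

theorem exists_of_mem_glue (hS : ∀ i, RowsWithin (L.get i).length (S i)) {x y : ℕ}
    (h : (x, y) ∈ glue L S) :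
    ∃ i r, 1 ≤ r ∧ r ≤ (L.get i).length ∧ x = r + blockOffset L i ∧ (r, y) ∈ S i := by
  obtain ⟨i, ⟨r, c⟩, hp, heq⟩ := mem_glue.mp h
  simp only [Prod.mk.injEq] at heq
  obtain ⟨rfl, rfl⟩ := heq
  exact ⟨i, r, (hS i _ hp).1, (hS i _ hp).2, rfl, hp⟩

theorem glue_update_move (hS : ∀ i, RowsWithin (L.get i).length (S i)) (i : Fin L.length)
    {ρ ρ' c : ℕ} (hρ' : 1 ≤ ρ') (hlt : ρ' < ρ) (hρ : ρ ≤ (L.get i).length) :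
    glue L (Function.update S i (insert (ρ', c) ((S i).erase (ρ, c)))) =
      insert (ρ' + blockOffset L i, c) ((glue L S).erase (ρ + blockOffset L i, c)) := by
  ext q
  simp only [Finset.mem_insert, Finset.mem_erase, mem_glue]
  constructor
  · rintro ⟨j, p, hp, rfl⟩
    rcases eq_or_ne j i with rfl | hji
    · rw [Function.update_self, Finset.mem_insert, Finset.mem_erase] at hp
      rcases hp with rfl | ⟨hne, hp⟩
      · exact Or.inl rfl
      · refine Or.inr ⟨fun h => hne ?_, j, p, hp, rfl⟩
        simp only [Prod.mk.injEq] at h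
        exact Prod.ext (by omega) h.2
    · rw [Function.update_of_ne hji] at hp
      refine Or.inr ⟨fun h => hji ?_, j, p, hp, rfl⟩
      simp only [Prod.mk.injEq] at h
      exact eq_of_add_blockOffset_eq (hS j p hp).1 (hS j p hp).2 (by omega) hρ h.1
  · rintro (rfl | ⟨hne, j, p, hp, rfl⟩)
    · exact ⟨i, (ρ', c), by simp, rfl⟩
    · refine ⟨j, p, ?_, rfl⟩
      rcases eq_or_ne j i with rfl | hji
      · rw [Function.update_self]
        refine Finset.mem_insert_of_mem (Finset.mem_erase.mpr ⟨?_, hp⟩)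
        rintro rfl
        exact hne rfl
      · rwa [Function.update_of_ne hji]

theorem KMove.glue_update (hS : ∀ i, RowsWithin (L.get i).length (S i)) {i : Fin L.length}
    {S' : Diagram} (h : KMove (S i) S') : KMove (glue L S) (glue L (Function.update S i S')) := by
  obtain ⟨ρ, c, ρ', hρ', hlt, hρc, hright, hfree, hbetween, rfl⟩ := h
  obtain ⟨hρ1, hρn⟩ : 1 ≤ ρ ∧ ρ ≤ (L.get i).length := hS i _ hρc
  refine ⟨ρ + blockOffset L i, c, ρ' + blockOffset L i, by omega, by omega,
    (add_blockOffset_mem_glue_iff hS i hρ1 hρn).2 hρc, fun c' hc' => ?_, ?_, fun r₁ h₁ h₂ => ?_,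
    glue_update_move hS i hρ' hlt hρn⟩
  · rw [add_blockOffset_mem_glue_iff hS i hρ1 hρn]
    exact hright c' hc'
  · rw [add_blockOffset_mem_glue_iff hS i hρ' (by omega)]
    exact hfree
  · obtain ⟨s, rfl⟩ : ∃ s, r₁ = s + blockOffset L i := ⟨r₁ - blockOffset L i, by omega⟩
    rw [add_blockOffset_mem_glue_iff hS i (by omega) (by omega)]
    exact hbetween s (by omega) (by omega)

theorem KMove.exists_of_glue (hS : ∀ i, RowsWithin (L.get i).length (S i))
    (hfull : ∀ i, ∀ p ∈ S i, ∀ s, 1 ≤ s → s ≤ blockOffset L i → (s, p.2) ∈ glue L S)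
    {T : Diagram} (h : KMove (glue L S) T) :
    ∃ i S', KMove (S i) S' ∧ T = glue L (Function.update S i S') := by
  obtain ⟨r, c, r', hr', hlt, hrc, hright, hfree, hbetween, rfl⟩ := h
  obtain ⟨i, ρ, hρ1, hρn, rfl, hρc⟩ := exists_of_mem_glue hS hrc
  have hoff : blockOffset L i < r' := by
    by_contra hle
    exact hfree (hfull i _ hρc r' hr' (by omega))
  obtain ⟨ρ', rfl⟩ : ∃ ρ', r' = ρ' + blockOffset L i := ⟨r' - blockOffset L i, by omega⟩
  refine ⟨i, _, ⟨ρ, c, ρ', by omega, by omega, hρc, fun c' hc' h => ?_, fun h => ?_,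
    fun s h₁ h₂ => ?_, rfl⟩, (glue_update_move hS i (by omega) (by omega) hρn).symm⟩
  · exact hright c' hc' ((add_blockOffset_mem_glue_iff hS i hρ1 hρn).2 h)
  · exact hfree ((add_blockOffset_mem_glue_iff hS i (by omega) (by omega)).2 h)
  · exact (add_blockOffset_mem_glue_iff hS i (by omega) (by omega)).1 (hbetween _ (by omega) (by omega))

theorem KReach.glue_update (hS : ∀ i, RowsWithin (L.get i).length (S i)) (i : Fin L.length)
    {X : Diagram} (h : KReach (S i) X) : KReach (glue L S) (glue L (Function.update S i X)) := by
  induction h with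
  | refl =>
    rw [Function.update_eq_self]
    exact Relation.ReflTransGen.refl
  | @tail Y Z hY hYZ ih =>
    have hS' : ∀ j, RowsWithin (L.get j).length (Function.update S i Y j) := fun j => by
      rcases eq_or_ne j i with rfl | hji
      · rw [Function.update_self]
        exact KReach.rowsWithin (hS j) hY
      · rw [Function.update_of_ne hji]
        exact hS j
    have hmove := KMove.glue_update hS' (i := i) (S' := Z) (by rwa [Function.update_self])
    rw [Function.update_idem] at hmove
    exact ih.tail hmove

theorem KReach.glue_of_forall (hS : ∀ i, RowsWithin (L.get i).length (S i)) {S' : Fin L.length → Diagram}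
    (h : ∀ i, KReach (S i) (S' i)) : KReach (glue L S) (glue L S') := by
  suffices ∀ I : Finset (Fin L.length), KReach (glue L S) (glue L (I.piecewise S' S)) by
    simpa using this Finset.univ
  intro I
  induction I using Finset.induction_on with
  | empty =>
    rw [Finset.piecewise_empty]
    exact Relation.ReflTransGen.refl
  | insert j I hj ih =>
    rw [Finset.piecewise_insert]
    refine Relation.ReflTransGen.trans ih (KReach.glue_update (fun k => ?_) j ?_)
    · by_cases hk : k ∈ I
      · rw [Finset.piecewise_eq_of_mem _ _ _ hk]
        exact KReach.rowsWithin (hS k) (h k)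
      · rw [Finset.piecewise_eq_of_notMem _ _ _ hk]
        exact hS k
    · rw [Finset.piecewise_eq_of_notMem _ _ _ hj]
      exact h j

end Glue

def rowWindow (o n : ℕ) (T : Diagram) : Diagram :=
  (T.filter fun p => o < p.1 ∧ p.1 ≤ o + n).image fun p => (p.1 - o, p.2)

def blockWindows (L : List (List ℕ)) (T : Diagram) : Fin L.length → Diagram :=
  fun i => rowWindow (blockOffset L i) (L.get i).length T

section Decomposition

variable {L : List (List ℕ)}

theorem blockWindows_glue {S : Fin L.length → Diagram}
    (hS : ∀ i, RowsWithin (L.get i).length (S i)) : blockWindows L (glue L S) = S := by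
  funext i
  ext ⟨r, c⟩
  simp only [blockWindows, rowWindow, Finset.mem_image, Finset.mem_filter, Prod.mk.injEq]
  constructor
  · rintro ⟨⟨x, y⟩, ⟨hxy, hlo, hhi⟩, rfl, rfl⟩
    obtain ⟨s, rfl⟩ : ∃ s, x = s + blockOffset L i := ⟨x - blockOffset L i, by omega⟩
    rw [add_blockOffset_mem_glue_iff hS i (by omega) (by omega)] at hxy
    simpa using hxy
  · intro h
    obtain ⟨hr, hrn⟩ := hS i _ h
    exact ⟨(r + blockOffset L i, c), ⟨(add_blockOffset_mem_glue_iff hS i hr hrn).2 h,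
      by omega, by omega⟩, by simp, rfl⟩

theorem keyDiagramL_flatten : keyDiagramL L.flatten = glue L fun i => keyDiagramL (L.get i) := by
  have hS := fun i => rowsWithin_keyDiagramL (L.get i)
  ext ⟨x, y⟩
  constructor
  · intro h
    obtain ⟨hx, hxn, hy, hyx⟩ := mem_keyDiagramL.mp h
    obtain ⟨i, -, r, hr, hri, rfl⟩ :=
      exists_add_blockOffset_eq hx le_rfl (blockOffset_length.symm ▸ hxn)
    rw [add_blockOffset_mem_glue_iff hS i hr hri, mem_keyDiagramL,
      ← getD_flatten_blockOffset_add i (by omega)]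
    exact ⟨hr, hri, hy, by rwa [show blockOffset L i + (r - 1) = r + blockOffset L i - 1 by omega]⟩
  · intro h
    obtain ⟨i, r, hr, hri, rfl, hry⟩ := exists_of_mem_glue hS h
    obtain ⟨-, -, hy, hyr⟩ := mem_keyDiagramL.mp hry
    have := blockOffset_succ i
    have := blockOffset_mono (L := L) (show (i : ℕ) + 1 ≤ L.length from i.isLt)
    rw [mem_keyDiagramL, ← blockOffset_length,
      show r + blockOffset L i - 1 = blockOffset L i + (r - 1) by omega,
      getD_flatten_blockOffset_add i (by omega)]
    exact ⟨by omega, by omega, hy, hyr⟩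

variable (hL : L.Pairwise fun A B => ∀ x ∈ A, ∀ y ∈ B, y ≤ x)
include hL

theorem glue_column_full {S : Fin L.length → Diagram}
    (hS : ∀ i, S i ∈ KD (keyDiagramL (L.get i))) (i : Fin L.length) {p : ℕ × ℕ} (hp : p ∈ S i)
    {s : ℕ} (hs : 1 ≤ s) (hsi : s ≤ blockOffset L i) : (s, p.2) ∈ glue L S := by
  obtain ⟨j, hji, r, hr, hrj, rfl⟩ := exists_add_blockOffset_eq hs i.isLt.le hsi
  obtain ⟨hc, x, hx, hcx⟩ := exists_ge_snd_of_mem_KD (hS i) hp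
  rw [add_blockOffset_mem_glue_iff (fun k => rowsWithin_of_mem_KD (hS k)) j hr hrj]
  exact mem_of_mem_KD_of_forall_le (hS j) hc
    (fun y hy => hcx.trans (List.pairwise_iff_get.mp hL j i hji y hy x hx)) hr hrj

theorem KReach.exists_of_glue {S : Fin L.length → Diagram}
    (hS : ∀ i, S i ∈ KD (keyDiagramL (L.get i))) {T : Diagram} (h : KReach (glue L S) T) :
    ∃ S' : Fin L.length → Diagram, (∀ i, KReach (S i) (S' i)) ∧ T = glue L S' := by
  induction h with
  | refl => exact ⟨S, fun _ => Relation.ReflTransGen.refl, rfl⟩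
  | tail _ hmove ih =>
    obtain ⟨S₀, hS₀, rfl⟩ := ih
    have hKD : ∀ i, S₀ i ∈ KD (keyDiagramL (L.get i)) :=
      fun i => Relation.ReflTransGen.trans (hS i) (hS₀ i)
    obtain ⟨i, X, hX, rfl⟩ := KMove.exists_of_glue (fun i => rowsWithin_of_mem_KD (hKD i))
      (fun i _ hp _ hs hsi => glue_column_full hL hKD i hp hs hsi) hmove
    refine ⟨Function.update S₀ i X, fun j => ?_, rfl⟩
    rcases eq_or_ne j i with rfl | hji
    · rw [Function.update_self]
      exact (hS₀ j).tail hX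
    · rw [Function.update_of_ne hji]
      exact hS₀ j

theorem mem_KD_flatten_iff {T : Diagram} :
    T ∈ KD (keyDiagramL L.flatten) ↔
      ∃ S : Fin L.length → Diagram, (∀ i, S i ∈ KD (keyDiagramL (L.get i))) ∧ T = glue L S := by
  constructor
  · intro hT
    change KReach _ _ at hT
    rw [keyDiagramL_flatten] at hT
    exact KReach.exists_of_glue hL (fun _ => Relation.ReflTransGen.refl) hT
  · rintro ⟨S, hS, rfl⟩
    change KReach _ _
    rw [keyDiagramL_flatten]
    exact KReach.glue_of_forall (fun i => rowsWithin_keyDiagramL _) hS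

theorem kLe_glue_iff {S₁ S₂ : Fin L.length → Diagram}
    (hS₁ : ∀ i, RowsWithin (L.get i).length (S₁ i))
    (hS₂ : ∀ i, S₂ i ∈ KD (keyDiagramL (L.get i))) :
    KLe (glue L S₁) (glue L S₂) ↔ ∀ i, KLe (S₁ i) (S₂ i) := by
  refine ⟨fun h => ?_, KReach.glue_of_forall fun i => rowsWithin_of_mem_KD (hS₂ i)⟩
  obtain ⟨S', hS', heq⟩ := KReach.exists_of_glue hL hS₂ h
  have hS'rows : ∀ i, RowsWithin (L.get i).length (S' i) :=
    fun i => rowsWithin_of_mem_KD (Relation.ReflTransGen.trans (hS₂ i) (hS' i))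
  rwa [← blockWindows_glue hS₁, heq, blockWindows_glue hS'rows]

end Decomposition

theorem stmt_17_general (L : List (List ℕ)) (a : List ℕ)
    (ha : a = L.flatten)
    (hblocks : ∀ b ∈ L, b ≠ [])
    (hchain : L.Chain' fun A B => ∀ x ∈ A, ∀ y ∈ B, y ≤ x) :
    ∃ f : Diagram → (Fin L.length → Diagram),
      (∀ T ∈ KD (keyDiagramL a), ∀ i : Fin L.length,
        f T i ∈ KD (keyDiagramL (L.get i))) ∧
      (∀ T1 ∈ KD (keyDiagramL a), ∀ T2 ∈ KD (keyDiagramL a), f T1 = f T2 → T1 = T2) ∧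
      (∀ g : Fin L.length → Diagram, (∀ i, g i ∈ KD (keyDiagramL (L.get i))) →
        ∃ T ∈ KD (keyDiagramL a), f T = g) ∧
      (∀ T1 ∈ KD (keyDiagramL a), ∀ T2 ∈ KD (keyDiagramL a),
        (KLe T1 T2 ↔ ∀ i, KLe (f T1 i) (f T2 i))) := by
  subst ha
  have hL := List.pairwise_of_isChain_of_ne_nil hblocks hchain
  have hdecomp := fun T => (mem_KD_flatten_iff hL (T := T)).mp
  have hwin : ∀ S : Fin L.length → Diagram, (∀ i, S i ∈ KD (keyDiagramL (L.get i))) →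
      blockWindows L (glue L S) = S :=
    fun S hS => blockWindows_glue fun i => rowsWithin_of_mem_KD (hS i)
  refine ⟨blockWindows L, fun T hT => ?_, fun T₁ hT₁ T₂ hT₂ heq => ?_,
    fun g hg => ⟨glue L g, (mem_KD_flatten_iff hL).mpr ⟨g, hg, rfl⟩, hwin g hg⟩,
    fun T₁ hT₁ T₂ hT₂ => ?_⟩
  · obtain ⟨S, hS, rfl⟩ := hdecomp T hT
    rwa [hwin S hS]
  · obtain ⟨S₁, hS₁, rfl⟩ := hdecomp T₁ hT₁
    obtain ⟨S₂, hS₂, rfl⟩ := hdecomp T₂ hT₂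
    rw [hwin S₁ hS₁, hwin S₂ hS₂] at heq
    rw [heq]
  · obtain ⟨S₁, hS₁, rfl⟩ := hdecomp T₁ hT₁
    obtain ⟨S₂, hS₂, rfl⟩ := hdecomp T₂ hT₂
    rw [hwin S₁ hS₁, hwin S₂ hS₂]
    exact kLe_glue_iff hL (fun i => rowsWithin_of_mem_KD (hS₁ i)) hS₂

/-- If `a` is a pure composition with pure decomposition `(α₁,…,α_m)`, then
`P(𝔻(a)) ≅ P(𝔻(α₁)) × ⋯ × P(𝔻(α_m))` with the componentwise order. -/
theorem stmt_17 (L : List (List ℕ)) (a : List ℕ)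
    (ha : a = L.flatten) (hpure : PureCompL a)
    (hblocks : ∀ b ∈ L, b ≠ [])
    (hchain : L.Chain' fun A B => ∀ x ∈ A, ∀ y ∈ B, y ≤ x) :
    ∃ f : Diagram → (Fin L.length → Diagram),
      (∀ T ∈ KD (keyDiagramL a), ∀ i : Fin L.length,
        f T i ∈ KD (keyDiagramL (L.get i))) ∧
      (∀ T1 ∈ KD (keyDiagramL a), ∀ T2 ∈ KD (keyDiagramL a), f T1 = f T2 → T1 = T2) ∧
      (∀ g : Fin L.length → Diagram, (∀ i, g i ∈ KD (keyDiagramL (L.get i))) →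
        ∃ T ∈ KD (keyDiagramL a), f T = g) ∧
      (∀ T1 ∈ KD (keyDiagramL a), ∀ T2 ∈ KD (keyDiagramL a),
        (KLe T1 T2 ↔ ∀ i, KLe (f T1 i) (f T2 i))) :=
  stmt_17_general L a ha hblocks hchain

end KohnertPaper
end
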